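/- arXiv:2208.09670 — 2 statements merged into one kernel-verified Lean document; each statement's English description precedes it below -/
import Mathlib

section
/- Let (H,R) be a finite-dimensional quasi-triangular Hopf algebra and W a left H-module, regarded as a left H_R-comodule via ρ_R(w) = S(R_2^2 R_1^1) ⊗ R_2^1 R_1^2 w. Then the map H⊗W → W̄⊗H, h⊗w ↦ h_(1)w ⊗ h_(2), is an isomorphism in _H^{H_R}M, with inverse w⊗h ↦ S^{-1}(h_(1))w ⊗ h_(2). Here H⊗W carries the structure h'(h⊗w) = h'h⊗w, ρ(h⊗w) = h_(1) ·_ad w_{⟨-1⟩} ⊗ h_(2) ⊗ w_{⟨0⟩}, and W̄⊗H denotes W⊗H with the diagonal H-action and the H_R-coaction on the first factor. -/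
open TensorProduct LinearMap

noncomputable section
namespace Paper

variable (k : Type*) [Field k] (H : Type*) [Ring H] [HopfAlgebra k H]

/-- The antipode of `H`. -/
abbrev S : H →ₗ[k] H := HopfAlgebra.antipode (R := k)

/-- The comultiplication of `H`. -/
abbrev Δ : H →ₗ[k] H ⊗[k] H := Coalgebra.comul

/-- The counit of `H`. -/
abbrev ε : H →ₗ[k] k := Coalgebra.counit

/-- The left adjoint action as a linear map `H ⊗ H → H`, `h ⊗ x ↦ h₍₁₎ * x * S h₍₂₎`. -/
def adT : H ⊗[k] H →ₗ[k] H :=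
  mul' k H ∘ₗ
    lTensor H (mul' k H) ∘ₗ
    lTensor H (TensorProduct.comm k H H).toLinearMap ∘ₗ
    (TensorProduct.assoc k H H H).toLinearMap ∘ₗ
    rTensor H (lTensor H (S k H)) ∘ₗ
    rTensor H (Δ k H)

/-- The left adjoint action, pointwise: `ad h x = h₍₁₎ * x * S h₍₂₎`. -/
def ad (h x : H) : H := adT k H (h ⊗ₜ x)

variable (R : H ⊗[k] H)

/-- `R₁₂ ∈ H ⊗ H ⊗ H`. -/
def r12 : H ⊗[k] (H ⊗[k] H) :=
  (Algebra.TensorProduct.map (AlgHom.id k H) Algebra.TensorProduct.includeLeft) R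

/-- `R₁₃ ∈ H ⊗ H ⊗ H`. -/
def r13 : H ⊗[k] (H ⊗[k] H) :=
  (Algebra.TensorProduct.map (AlgHom.id k H) Algebra.TensorProduct.includeRight) R

/-- `R₂₃ ∈ H ⊗ H ⊗ H`. -/
def r23 : H ⊗[k] (H ⊗[k] H) :=
  (Algebra.TensorProduct.includeRight : (H ⊗[k] H) →ₐ[k] H ⊗[k] (H ⊗[k] H)) R

/-- `(H, R)` is a quasi-triangular Hopf algebra, i.e. `R` is invertible,
`R Δ(h) R⁻¹ = Δᵒᵖ(h)`, `(Δ ⊗ id)(R) = R₁₃R₂₃` and `(id ⊗ Δ)(R) = R₁₃R₁₂`. -/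
structure IsQuasiTriangular : Prop where
  isUnit : IsUnit R
  comul_compat : ∀ h : H, R * Δ k H h = (TensorProduct.comm k H H) (Δ k H h) * R
  comul_rTensor :
    (TensorProduct.assoc k H H H) ((rTensor H (Δ k H)) R) = r13 k H R * r23 k H R
  comul_lTensor : (lTensor H (Δ k H)) R = r13 k H R * r12 k H R

/-- The canonical element `u = Σ S(R₂² R₁¹) ⊗ R₂¹ R₁² = (S ⊗ id)(τ(R) · R) ∈ H ⊗ H`. -/
def uElt : H ⊗[k] H := rTensor H (S k H) ((TensorProduct.comm k H H) R * R)

/-- The element `Σ R₁² R₂¹ ⊗ R₁¹ R₂² = τ(R · τ(R)) ∈ H ⊗ H`. -/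
def vElt : H ⊗[k] H := (TensorProduct.comm k H H) (R * (TensorProduct.comm k H H) R)

/-- The factorization map `H* → H`, `p ↦ ⟨p, R₁² R₂¹⟩ R₁¹ R₂²`. -/
def factMap (p : Module.Dual k H) : H :=
  (TensorProduct.lid k H) ((rTensor H p) (vElt k H R))

/-- `(H, R)` is factorizable: the factorization map is bijective. -/
def IsFactorizable : Prop := Function.Bijective (factMap k H R)

/-- The comultiplication `Δ_R` of the transmuted braided group `H_R`:
`Δ_R(h) = h₍₁₎ S(R²) ⊗ R¹ ·ad h₍₂₎`. -/
def DeltaR : H →ₗ[k] H ⊗[k] H :=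
  (TensorProduct.map
      ((mul' k H) ∘ₗ lTensor H (S k H))
      ((adT k H) ∘ₗ (TensorProduct.comm k H H).toLinearMap)) ∘ₗ
    (tensorTensorTensorComm k H H H H).toLinearMap ∘ₗ
    (lTensor (H ⊗[k] H) (TensorProduct.comm k H H).toLinearMap) ∘ₗ
    ((TensorProduct.mk k (H ⊗[k] H) (H ⊗[k] H)).flip R) ∘ₗ
    (Δ k H)

section Comodule

variable {k H}
variable {V : Type*} [AddCommGroup V] [Module k V]
variable {P : Type*} [AddCommGroup P] [Module k P]

/-- `ρ : V → H ⊗ V` is a left comodule structure over the coalgebra `(H, Δ', ε')`. -/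
def IsComodStr (Δ' : H →ₗ[k] H ⊗[k] H) (ε' : H →ₗ[k] k) (ρ : V →ₗ[k] H ⊗[k] V) : Prop :=
  (TensorProduct.assoc k H H V).toLinearMap ∘ₗ rTensor V Δ' ∘ₗ ρ = lTensor H ρ ∘ₗ ρ ∧
    (TensorProduct.lid k V).toLinearMap ∘ₗ rTensor V ε' ∘ₗ ρ = LinearMap.id

/-- `act : H ⊗ V → V` is a left module structure over the algebra `H`. -/
def IsActionStr (act : H ⊗[k] V →ₗ[k] V) : Prop :=
  (∀ v : V, act (1 ⊗ₜ v) = v) ∧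
    ∀ (g h : H) (v : V), act ((g * h) ⊗ₜ v) = act (g ⊗ₜ act (h ⊗ₜ v))

/-- The compatibility condition making `(V, act, ρ)` an object of `{}_H^{H_R}𝓜`:
`ρ(h·v) = h₍₁₎ ·ad v₍₋₁₎ ⊗ h₍₂₎ · v₍₀₎`. -/
def IsYDCompat (act : H ⊗[k] V →ₗ[k] V) (ρ : V →ₗ[k] H ⊗[k] V) : Prop :=
  ρ ∘ₗ act =
    (TensorProduct.map (adT k H) act) ∘ₗ
      (tensorTensorTensorComm k H H H V).toLinearMap ∘ₗ (TensorProduct.map (Δ k H) ρ)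

/-- `(V, act, ρ)` is an object of the category `{}_H^{H_R}𝓜` of relative Hopf modules. -/
def IsRelHopfModule (R : H ⊗[k] H) (act : H ⊗[k] V →ₗ[k] V) (ρ : V →ₗ[k] H ⊗[k] V) : Prop :=
  IsActionStr act ∧ IsComodStr (DeltaR k H R) (ε k H) ρ ∧ IsYDCompat act ρ

/-- A submodule `U` is a subcomodule for the coaction `ρ : V → H ⊗ V`. -/
def IsSubcomodule (ρ : V →ₗ[k] H ⊗[k] V) (U : Submodule k V) : Prop :=
  ∀ u ∈ U, ρ u ∈ LinearMap.range (lTensor H U.subtype)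

/-- A left comodule is simple if it is nonzero and has no nontrivial subcomodules. -/
def IsSimpleComodule (ρ : V →ₗ[k] H ⊗[k] V) : Prop :=
  (⊥ : Submodule k V) ≠ ⊤ ∧ ∀ U : Submodule k V, IsSubcomodule ρ U → U = ⊥ ∨ U = ⊤

/-- A submodule `U ≤ V` is a subobject of `(V, act, ρ)` in `{}_H^{H_R}𝓜`
(i.e. stable under the action and a subcomodule). -/
def IsYDSubmodule (act : H ⊗[k] V →ₗ[k] V) (ρ : V →ₗ[k] H ⊗[k] V)
    (U : Submodule k V) : Prop :=
  (∀ (h : H), ∀ u ∈ U, act (h ⊗ₜ u) ∈ U) ∧ IsSubcomodule ρ U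

/-- `(V, act, ρ)` is a simple (irreducible) object. -/
def IsSimpleYD (act : H ⊗[k] V →ₗ[k] V) (ρ : V →ₗ[k] H ⊗[k] V) : Prop :=
  (⊥ : Submodule k V) ≠ ⊤ ∧ ∀ U : Submodule k V, IsYDSubmodule act ρ U → U = ⊥ ∨ U = ⊤

/-- The subcoalgebra `D_V ⊆ H_R` associated with a comodule `(V, ρ)`:
the span of all `v₍₋₁₎ ⟨φ, v₍₀₎⟩`. -/
def Dspace (ρ : V →ₗ[k] H ⊗[k] V) : Submodule k H :=
  Submodule.span k {x : H | ∃ (v : V) (φ : Module.Dual k V),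
    x = (TensorProduct.rid k H) ((lTensor H φ) (ρ v))}

end Comodule

section Coalg

variable {k H}

/-- A submodule `C ≤ H` is a subcoalgebra for the comultiplication `Δ'`. -/
def IsSubcoalgebra (Δ' : H →ₗ[k] H ⊗[k] H) (C : Submodule k H) : Prop :=
  ∀ c ∈ C, Δ' c ∈ LinearMap.range (TensorProduct.map C.subtype C.subtype)

/-- A subcoalgebra is simple if it is nonzero and contains no nontrivial subcoalgebra. -/
def IsSimpleSubcoalgebra (Δ' : H →ₗ[k] H ⊗[k] H) (C : Submodule k H) : Prop :=
  C ≠ ⊥ ∧ IsSubcoalgebra Δ' C ∧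
    ∀ C' ≤ C, IsSubcoalgebra Δ' C' → C' = ⊥ ∨ C' = C

/-- A coalgebra is cosemisimple if it is the sum of its simple subcoalgebras. -/
def IsCosemisimple (Δ' : H →ₗ[k] H ⊗[k] H) : Prop :=
  sSup {C : Submodule k H | IsSimpleSubcoalgebra Δ' C} = ⊤

/-- A submodule `C ≤ H` is `H`-stable (for the left adjoint action). -/
def IsHStable (C : Submodule k H) : Prop :=
  ∀ h : H, ∀ c ∈ C, ad k H h c ∈ C

end Coalg

section ModuleMaps

variable {k H}
variable (W : Type*) [AddCommGroup W] [Module k W] [Module H W] [IsScalarTower k H W]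
variable (M : Type*) [AddCommGroup M] [Module k M] [Module H M] [IsScalarTower k H M]

/-- The `H`-module structure of `W` as a linear map `H ⊗ W → W`. -/
def actT : H ⊗[k] W →ₗ[k] W :=
  TensorProduct.lift (Algebra.lsmul k k W).toLinearMap

variable {W M}

/-- The left `H_R`-comodule structure on a module with action `aW`, induced by the
element `u ∈ H ⊗ H`: `ρ_R(w) = S(R₂² R₁¹) ⊗ R₂¹ R₁² w`. -/
def coactR (R : H ⊗[k] H) {W : Type*} [AddCommGroup W] [Module k W]
    (aW : H ⊗[k] W →ₗ[k] W) : W →ₗ[k] H ⊗[k] W :=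
  (lTensor H aW) ∘ₗ (TensorProduct.assoc k H H W).toLinearMap ∘ₗ
    (TensorProduct.mk k (H ⊗[k] H) W (uElt k H R))

/-- The diagonal `H`-action on `W ⊗ M`: `h · (w ⊗ m) = h₍₁₎ w ⊗ h₍₂₎ m`. -/
def diagAct {W M : Type*} [AddCommGroup W] [Module k W] [AddCommGroup M] [Module k M]
    (aW : H ⊗[k] W →ₗ[k] W) (aM : H ⊗[k] M →ₗ[k] M) :
    H ⊗[k] (W ⊗[k] M) →ₗ[k] W ⊗[k] M :=
  (TensorProduct.map aW aM) ∘ₗ (tensorTensorTensorComm k H H W M).toLinearMap ∘ₗ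
    rTensor (W ⊗[k] M) (Δ k H)

/-- The coaction on `W̄ ⊗ M` (coacting on the first factor only). -/
def barCoact {W : Type*} [AddCommGroup W] [Module k W]
    (ρ : W →ₗ[k] H ⊗[k] W) (M : Type*) [AddCommGroup M] [Module k M] :
    W ⊗[k] M →ₗ[k] H ⊗[k] (W ⊗[k] M) :=
  (TensorProduct.assoc k H W M).toLinearMap ∘ₗ rTensor M ρ

/-- The `H`-action on `H ⊗ W` by left multiplication on the first factor. -/
def regAct (W : Type*) [AddCommGroup W] [Module k W] :
    H ⊗[k] (H ⊗[k] W) →ₗ[k] H ⊗[k] W :=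
  rTensor W (mul' k H) ∘ₗ (TensorProduct.assoc k H H W).symm.toLinearMap

/-- The `H_R`-coaction on `H ⊗ W` induced by a coaction `ρ` on `W`:
`ρ(h ⊗ w) = h₍₁₎ ·ad w₍₋₁₎ ⊗ h₍₂₎ ⊗ w₍₀₎`. -/
def inducedCoact {W : Type*} [AddCommGroup W] [Module k W]
    (ρ : W →ₗ[k] H ⊗[k] W) : H ⊗[k] W →ₗ[k] H ⊗[k] (H ⊗[k] W) :=
  rTensor (H ⊗[k] W) (adT k H) ∘ₗ (tensorTensorTensorComm k H H H W).toLinearMap ∘ₗ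
    TensorProduct.map (Δ k H) ρ

/-- The left `H`-module structure on `W*` given by `⟨h φ, w⟩ = ⟨φ, S⁻¹(h) w⟩`,
where `S'` is the (given) inverse of the antipode. -/
def dualAct {W : Type*} [AddCommGroup W] [Module k W]
    (S' : H →ₗ[k] H) (aW : H ⊗[k] W →ₗ[k] W) :
    H ⊗[k] Module.Dual k W →ₗ[k] Module.Dual k W :=
  TensorProduct.lift
    (((llcomp k W W k).flip) ∘ₗ
      ((llcomp k W (H ⊗[k] W) W aW) ∘ₗ (TensorProduct.mk k H W) ∘ₗ S'))

end ModuleMaps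

section DualComod

variable {k H}
variable {W : Type*} [AddCommGroup W] [Module k W] [Module.Finite k W] [Module.Free k W]

/-- The right `D`-comodule structure on `W*` induced from a left coaction `ρ` on `W`,
characterized by `Σ ⟨φ₍₀₎, w⟩ φ₍₁₎ = Σ w₍₋₁₎ ⟨φ, w₍₀₎⟩`. -/
def dualCoact (ρ : W →ₗ[k] H ⊗[k] W) :
    Module.Dual k W →ₗ[k] Module.Dual k W ⊗[k] H :=
  (dualTensorHomEquiv k W H).symm.toLinearMap ∘ₗ
    (lcomp k H ρ) ∘ₗ
    (llcomp k (H ⊗[k] W) (H ⊗[k] k) H (TensorProduct.rid k H).toLinearMap) ∘ₗ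
    (lTensorHom (R := k) H)

end DualComod

section Cotensor

variable {k H}
variable {P V : Type*} [AddCommGroup P] [Module k P] [AddCommGroup V] [Module k V]

/-- The cotensor product `P □ V` of a right comodule `(P, ρ')` and a left comodule
`(V, ρ)`, realized as a subspace of `P ⊗ V`. -/
def cotensor (ρ' : P →ₗ[k] P ⊗[k] H) (ρ : V →ₗ[k] H ⊗[k] V) :
    Submodule k (P ⊗[k] V) :=
  LinearMap.ker
    ((TensorProduct.assoc k P H V).toLinearMap ∘ₗ rTensor V ρ' - lTensor P ρ)

end Cotensor

section NW

variable {k H}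
variable {W : Type*} [AddCommGroup W] [Module k W] [Module.Finite k W] [Module.Free k W]

/-- The underlying subspace of the `R`-adjoint-stable algebra
`N_W = W* □_D (H ⊗ W)`. -/
def NWspace (ρ : W →ₗ[k] H ⊗[k] W) :
    Submodule k (Module.Dual k W ⊗[k] (H ⊗[k] W)) :=
  cotensor (dualCoact ρ) (inducedCoact ρ)

variable (k H W)

/-- The multiplication of `N_W` as a linear map on the ambient space
`W* ⊗ (H ⊗ W)`: `(φ ⊗ h ⊗ w) ∘ (ψ ⊗ g ⊗ v) = ψ ⊗ g h ⊗ ⟨φ, v⟩ w`. -/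
def muNW :
    (Module.Dual k W ⊗[k] (H ⊗[k] W)) ⊗[k] (Module.Dual k W ⊗[k] (H ⊗[k] W)) →ₗ[k]
      Module.Dual k W ⊗[k] (H ⊗[k] W) :=
  (TensorProduct.assoc k (Module.Dual k W) H W).toLinearMap ∘ₗ
    (TensorProduct.map LinearMap.id
      (((TensorProduct.lid k W).toLinearMap) ∘ₗ
        (rTensor W (contractLeft k W)) ∘ₗ
        (TensorProduct.assoc k (Module.Dual k W) W W).symm.toLinearMap ∘ₗ
        (lTensor (Module.Dual k W) (TensorProduct.comm k W W).toLinearMap))) ∘ₗ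
    (tensorTensorTensorComm k (Module.Dual k W) (Module.Dual k W) H
      (W ⊗[k] W)).toLinearMap ∘ₗ
    (TensorProduct.map (TensorProduct.comm k (Module.Dual k W)
        (Module.Dual k W)).toLinearMap
      ((TensorProduct.map ((mul' k H) ∘ₗ (TensorProduct.comm k H H).toLinearMap)
          LinearMap.id) ∘ₗ
        (tensorTensorTensorComm k H W H W).toLinearMap)) ∘ₗ
    (tensorTensorTensorComm k (Module.Dual k W) (H ⊗[k] W) (Module.Dual k W)
      (H ⊗[k] W)).toLinearMap

variable {k H W}

/-- The multiplication of `N_W`, pointwise. -/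
def muN (x y : Module.Dual k W ⊗[k] (H ⊗[k] W)) :
    Module.Dual k W ⊗[k] (H ⊗[k] W) :=
  muNW k H W (x ⊗ₜ y)

variable (k H W)

/-- The left action of (the ambient space of) `N_W` on `H ⊗ W`:
`(φ ⊗ h' ⊗ w') · (h ⊗ w) = h h' ⊗ ⟨φ, w⟩ w'`. -/
def nuNW :
    (Module.Dual k W ⊗[k] (H ⊗[k] W)) ⊗[k] (H ⊗[k] W) →ₗ[k] H ⊗[k] W :=
  (TensorProduct.map (mul' k H)
      (((TensorProduct.lid k W).toLinearMap) ∘ₗ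
        (rTensor W (contractLeft k W)) ∘ₗ
        (TensorProduct.assoc k (Module.Dual k W) W W).symm.toLinearMap ∘ₗ
        (lTensor (Module.Dual k W) (TensorProduct.comm k W W).toLinearMap))) ∘ₗ
    (tensorTensorTensorComm k H (Module.Dual k W) H (W ⊗[k] W)).toLinearMap ∘ₗ
    (TensorProduct.map (TensorProduct.comm k (Module.Dual k W) H).toLinearMap
      (TensorProduct.assoc k H W W).toLinearMap) ∘ₗ
    (tensorTensorTensorComm k (Module.Dual k W) (H ⊗[k] W) H W).toLinearMap

/-- The right action of (the ambient space of) `N_W` on `W* ⊗ V` (for `V` a comodule),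
`(φ ⊗ v) · (ψ ⊗ h ⊗ w) = ψ ⊗ ⟨φ, w⟩ (h · v)`, relative to an action `aV` on `V`. -/
def actNW (V : Type*) [AddCommGroup V] [Module k V] (aV : H ⊗[k] V →ₗ[k] V) :
    (Module.Dual k W ⊗[k] V) ⊗[k] (Module.Dual k W ⊗[k] (H ⊗[k] W)) →ₗ[k]
      Module.Dual k W ⊗[k] V :=
  (TensorProduct.rid k (Module.Dual k W ⊗[k] V)).toLinearMap ∘ₗ
    (TensorProduct.map LinearMap.id (contractLeft k W)) ∘ₗ
    (tensorTensorTensorComm k (Module.Dual k W) (Module.Dual k W) V W).toLinearMap ∘ₗ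
    (TensorProduct.map (TensorProduct.comm k (Module.Dual k W)
        (Module.Dual k W)).toLinearMap
      ((rTensor W aV) ∘ₗ (rTensor W (TensorProduct.comm k V H).toLinearMap) ∘ₗ
        (TensorProduct.assoc k V H W).symm.toLinearMap)) ∘ₗ
    (tensorTensorTensorComm k (Module.Dual k W) V (Module.Dual k W)
      (H ⊗[k] W)).toLinearMap

variable {k H W}

/-- Pointwise right `N_W`-action. -/
def actN {V : Type*} [AddCommGroup V] [Module k V] (aV : H ⊗[k] V →ₗ[k] V)
    (x : Module.Dual k W ⊗[k] V) (y : Module.Dual k W ⊗[k] (H ⊗[k] W)) :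
    Module.Dual k W ⊗[k] V :=
  actNW k H W V aV (x ⊗ₜ y)

variable (k H W)

/-- The evaluation map `(W* ⊗ V) ⊗ (H ⊗ W) → V`, `(φ ⊗ v) ⊗ (h ⊗ w) ↦ ⟨φ, w⟩ h·v`. -/
def evNW (V : Type*) [AddCommGroup V] [Module k V] (aV : H ⊗[k] V →ₗ[k] V) :
    (Module.Dual k W ⊗[k] V) ⊗[k] (H ⊗[k] W) →ₗ[k] V :=
  (TensorProduct.rid k V).toLinearMap ∘ₗ
    (TensorProduct.map aV (contractLeft k W)) ∘ₗ
    (tensorTensorTensorComm k H (Module.Dual k W) V W).toLinearMap ∘ₗ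
    (TensorProduct.map (TensorProduct.comm k (Module.Dual k W) H).toLinearMap
      LinearMap.id) ∘ₗ
    (tensorTensorTensorComm k (Module.Dual k W) V H W).toLinearMap

variable {k H W}

/-- The canonical (coevaluation) element `Σᵢ wᵢ* ⊗ wᵢ ∈ W* ⊗ W` for a dual basis. -/
def coevElt : Module.Dual k W ⊗[k] W :=
  (dualTensorHomEquiv k W W).symm LinearMap.id

end NW

section Maps

variable {k H}

/-- The map `H ⊗ W → W̄ ⊗ H`, `h ⊗ w ↦ h₍₁₎ w ⊗ h₍₂₎`. -/
def betaMap (W : Type*) [AddCommGroup W] [Module k W] [Module H W]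
    [IsScalarTower k H W] : H ⊗[k] W →ₗ[k] W ⊗[k] H :=
  rTensor H (actT W) ∘ₗ
    (TensorProduct.assoc k H W H).symm.toLinearMap ∘ₗ
    lTensor H (TensorProduct.comm k H W).toLinearMap ∘ₗ
    (TensorProduct.assoc k H H W).toLinearMap ∘ₗ
    rTensor W (Δ k H)

/-- The inverse map `W̄ ⊗ H → H ⊗ W`, `w ⊗ h ↦ h₍₂₎ ⊗ S⁻¹(h₍₁₎) w`
(where `S'` is the inverse of the antipode). -/
def gammaMap (W : Type*) [AddCommGroup W] [Module k W] [Module H W]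
    [IsScalarTower k H W] (S' : H →ₗ[k] H) : W ⊗[k] H →ₗ[k] H ⊗[k] W :=
  (TensorProduct.comm k W H).toLinearMap ∘ₗ
    rTensor H (actT W) ∘ₗ
    rTensor H (rTensor W S') ∘ₗ
    rTensor H (TensorProduct.comm k W H).toLinearMap ∘ₗ
    (TensorProduct.assoc k W H H).symm.toLinearMap ∘ₗ
    lTensor W (Δ k H)

/-- The map `K : H ⊗ (H ⊗ W) → H ⊗ W`, `a ⊗ (b ⊗ w) ↦ b ⊗ (a · w)`. -/
def swapActMap (W : Type*) [AddCommGroup W] [Module k W] [Module H W]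
    [IsScalarTower k H W] : H ⊗[k] (H ⊗[k] W) →ₗ[k] H ⊗[k] W :=
  lTensor H (actT W) ∘ₗ
    (TensorProduct.assoc k H H W).toLinearMap ∘ₗ
    rTensor W (TensorProduct.comm k H H).toLinearMap ∘ₗ
    (TensorProduct.assoc k H H W).symm.toLinearMap

/-- The map `ψ : H → W* ⊗ (H ⊗ W)`, `ψ(h) = Σᵢ wᵢ* ⊗ h₍₂₎ ⊗ S⁻¹(h₍₁₎) wᵢ`. -/
def psiMap (W : Type*) [AddCommGroup W] [Module k W] [Module H W]
    [IsScalarTower k H W] [Module.Finite k W] [Module.Free k W]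
    (S' : H →ₗ[k] H) : H →ₗ[k] Module.Dual k W ⊗[k] (H ⊗[k] W) :=
  lTensor (Module.Dual k W) (swapActMap W) ∘ₗ
    (TensorProduct.assoc k (Module.Dual k W) H (H ⊗[k] W)).toLinearMap ∘ₗ
    (TensorProduct.map (TensorProduct.comm k H (Module.Dual k W)).toLinearMap
      LinearMap.id) ∘ₗ
    (tensorTensorTensorComm k H H (Module.Dual k W) W).toLinearMap ∘ₗ
    ((TensorProduct.mk k (H ⊗[k] H)
        (Module.Dual k W ⊗[k] W)).flip (coevElt (W := W))) ∘ₗ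
    rTensor H S' ∘ₗ
    (Δ k H)

/-- The map `j : M → W* ⊗ (W ⊗ M)`, `m ↦ Σᵢ wᵢ* ⊗ (wᵢ ⊗ m)`. -/
def jMap (W : Type*) [AddCommGroup W] [Module k W] [Module.Finite k W]
    [Module.Free k W] (M : Type*) [AddCommGroup M] [Module k M] :
    M →ₗ[k] Module.Dual k W ⊗[k] (W ⊗[k] M) :=
  (TensorProduct.assoc k (Module.Dual k W) W M).toLinearMap ∘ₗ
    (TensorProduct.mk k (Module.Dual k W ⊗[k] W) M (coevElt (W := W)))

/-- The map `U ⊗ (H ⊗ X) → H ⊗ (U ⊗ X)`, `u ⊗ (a ⊗ x) ↦ a ⊗ (u ⊗ x)`. -/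
def pushOut (U X : Type*) [AddCommGroup U] [Module k U] [AddCommGroup X]
    [Module k X] : U ⊗[k] (H ⊗[k] X) →ₗ[k] H ⊗[k] (U ⊗[k] X) :=
  (TensorProduct.assoc k H U X).toLinearMap ∘ₗ
    rTensor X (TensorProduct.comm k U H).toLinearMap ∘ₗ
    (TensorProduct.assoc k U H X).symm.toLinearMap

/-- The map `H ⊗ (U ⊗ X) → U ⊗ (H ⊗ X)`, `a ⊗ (u ⊗ x) ↦ u ⊗ (a ⊗ x)`. -/
def pullIn (U X : Type*) [AddCommGroup U] [Module k U] [AddCommGroup X]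
    [Module k X] : H ⊗[k] (U ⊗[k] X) →ₗ[k] U ⊗[k] (H ⊗[k] X) :=
  (TensorProduct.assoc k U H X).toLinearMap ∘ₗ
    rTensor X (TensorProduct.comm k H U).toLinearMap ∘ₗ
    (TensorProduct.assoc k H U X).symm.toLinearMap

end Maps

section EndAlg

variable {k H}
variable (W : Type*) [AddCommGroup W] [Module k W] [Module H W] [IsScalarTower k H W]

/-- The action of `H` on `W` as an algebra map `H → End_k W`. -/
def actEnd : H →ₗ[k] Module.End k W := (Algebra.lsmul k k W).toLinearMap

/-- The `H`-module structure on `(End^{H_R}(W))ᵒᵖ`: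
`(h · α)(w) = h₍₂₎ α (S⁻¹(h₍₁₎) w)`. -/
def endAct (S' : H →ₗ[k] H) : H →ₗ[k] Module.End k W →ₗ[k] Module.End k W :=
  TensorProduct.lift
    (((llcomp k (Module.End k W) (Module.End k W) (Module.End k W)) ∘ₗ
        ((llcomp k W W W) ∘ₗ (actEnd W))).flip ∘ₗ
      (((llcomp k W W W).flip) ∘ₗ (actEnd W) ∘ₗ S')) ∘ₗ
    (Δ k H)

end EndAlg

section Smash

variable (B : Type*) [AddCommGroup B] [Module k B]

/-- The smash product multiplication on `B ⊗ H`, for a multiplication `mulB` on `B`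
and an `H`-action `aB` on `B`: `(a ⊗ h)(b ⊗ g) = a (h₍₁₎ · b) ⊗ h₍₂₎ g`. -/
def smashMul (mulB : B ⊗[k] B →ₗ[k] B) (aB : H ⊗[k] B →ₗ[k] B) :
    (B ⊗[k] H) ⊗[k] (B ⊗[k] H) →ₗ[k] B ⊗[k] H :=
  (TensorProduct.map
      (mulB ∘ₗ lTensor B aB ∘ₗ (TensorProduct.assoc k B H B).toLinearMap)
      (mul' k H)) ∘ₗ
    (tensorTensorTensorComm k (B ⊗[k] H) H B H).toLinearMap ∘ₗ
    (TensorProduct.map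
      ((TensorProduct.assoc k B H H).symm.toLinearMap ∘ₗ lTensor B (Δ k H))
      LinearMap.id)

/-- The multiplication on (the ambient space of) `W* □_D W = (End^{H_R} W)ᵒᵖ`:
`(φ ⊗ w)(ψ ⊗ v) = ⟨ψ, w⟩ φ ⊗ v`. -/
def muEndOp (W : Type*) [AddCommGroup W] [Module k W] :
    (Module.Dual k W ⊗[k] W) ⊗[k] (Module.Dual k W ⊗[k] W) →ₗ[k]
      Module.Dual k W ⊗[k] W :=
  (TensorProduct.rid k (Module.Dual k W ⊗[k] W)).toLinearMap ∘ₗ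
    (TensorProduct.map LinearMap.id
      ((contractLeft k W) ∘ₗ (TensorProduct.comm k W (Module.Dual k W)).toLinearMap)) ∘ₗ
    (tensorTensorTensorComm k (Module.Dual k W) W W (Module.Dual k W)).toLinearMap ∘ₗ
    (TensorProduct.map LinearMap.id (TensorProduct.comm k (Module.Dual k W) W).toLinearMap)

end Smash

section DualAlg

/-- The convolution product on `H*`: `(f * g)(x) = f(x₍₁₎) g(x₍₂₎)`. -/
def conv (f g : Module.Dual k H) : Module.Dual k H :=
  (mul' k k) ∘ₗ (TensorProduct.map f g) ∘ₗ (Δ k H)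

/-- The hit action `h ⇀ f`, `(h ⇀ f)(x) = f(x h)`. -/
def hitL (h : H) (f : Module.Dual k H) : Module.Dual k H :=
  f ∘ₗ (LinearMap.mulRight k h)

/-- The hit action `f ↼ h`, `(f ↼ h)(x) = f(h x)`. -/
def hitR (f : Module.Dual k H) (h : H) : Module.Dual k H :=
  f ∘ₗ (LinearMap.mulLeft k h)

/-- The left `H`-module structure `⇀⇀` on `(H_R)* = H*`:
`⟨h ⇀⇀ f, x⟩ = f(S(h) ·ad x)`. -/
def hitAd (h : H) (f : Module.Dual k H) : Module.Dual k H :=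
  f ∘ₗ (adT k H) ∘ₗ (TensorProduct.mk k H H (S k H h))

variable (R : H ⊗[k] H)

/-- The map `Φ : (H_R)* → H_R`, `Φ(f) = ⟨f, S(R₂² R₁¹)⟩ R₂¹ R₁²  = (f ⊗ id)(u)`. -/
def PhiMap : Module.Dual k H →ₗ[k] H :=
  (TensorProduct.lid k H).toLinearMap ∘ₗ
    (LinearMap.applyₗ (uElt k H R)) ∘ₗ
    (rTensorHom (R := k) H)

/-- The multiplication `*_R` of the dual Hopf algebra `(H_R)*`:
`f *_R g = (S(R₁² R₂²) ⇀ g) * (S(R₂¹) ⇀ f ↼ R₁¹)`, i.e.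
`(f *_R g)(x) = Σ g(x₍₁₎ S(R₁² R₂²)) f(R₁¹ x₍₂₎ S(R₂¹))`. -/
def mulRAux (f g : Module.Dual k H) :
    ((H ⊗[k] H) ⊗[k] (H ⊗[k] H)) ⊗[k] (H ⊗[k] H) →ₗ[k] k :=
  (mul' k k) ∘ₗ
    (TensorProduct.map
      (g ∘ₗ (mul' k H) ∘ₗ lTensor H ((S k H) ∘ₗ (mul' k H)))
      (f ∘ₗ (mul' k H) ∘ₗ
        (TensorProduct.map (mul' k H) (S k H)))) ∘ₗ
    (TensorProduct.map
      (TensorProduct.comm k (H ⊗[k] H) H).toLinearMap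
      ((TensorProduct.assoc k H H H).symm.toLinearMap ∘ₗ
        lTensor H (TensorProduct.comm k H H).toLinearMap ∘ₗ
        (TensorProduct.assoc k H H H).toLinearMap)) ∘ₗ
    (tensorTensorTensorComm k (H ⊗[k] H) (H ⊗[k] H) H H).toLinearMap ∘ₗ
    (TensorProduct.map
      ((TensorProduct.comm k (H ⊗[k] H) (H ⊗[k] H)).toLinearMap ∘ₗ
        (tensorTensorTensorComm k H H H H).toLinearMap)
      LinearMap.id)

def mulR (f g : Module.Dual k H) : Module.Dual k H :=
  (mulRAux k H f g) ∘ₗ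
    ((TensorProduct.mk k ((H ⊗[k] H) ⊗[k] (H ⊗[k] H)) (H ⊗[k] H)) (R ⊗ₜ R)) ∘ₗ
    (Δ k H)

/-- The comultiplication of the dual Hopf algebra `(H_R)*`: `f ↦ f₍₂₎ ⊗ f₍₁₎`,
dual to the multiplication of `H_R` (which is that of `H`). -/
def dualComul [Module.Finite k H] : Module.Dual k H →ₗ[k]
    Module.Dual k H ⊗[k] Module.Dual k H :=
  (TensorProduct.comm k (Module.Dual k H) (Module.Dual k H)).toLinearMap ∘ₗ
    (TensorProduct.dualDistribEquiv k H H).symm.toLinearMap ∘ₗ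
    (mul' k H).dualMap

end DualAlg

section More

variable {k H}

/-- The map `W̄ ⊗ W* → H`, `w ⊗ φ ↦ w₍₋₁₎ ⟨φ, w₍₀₎⟩`, for a coaction `ρ` on `W`. -/
def dMap {W : Type*} [AddCommGroup W] [Module k W] (ρ : W →ₗ[k] H ⊗[k] W) :
    W ⊗[k] Module.Dual k W →ₗ[k] H :=
  (TensorProduct.rid k H).toLinearMap ∘ₗ
    lTensor H ((contractLeft k W) ∘ₗ
      (TensorProduct.comm k W (Module.Dual k W)).toLinearMap) ∘ₗ
    (TensorProduct.assoc k H W (Module.Dual k W)).toLinearMap ∘ₗ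
    rTensor (Module.Dual k W) ρ

/-- A Yetter–Drinfeld submodule of `(H, ·ad, Δ)`:
a subspace stable under the adjoint action and under the coaction `Δ`. -/
def IsYDSubmoduleOfH (C : Submodule k H) : Prop :=
  (∀ h : H, ∀ c ∈ C, ad k H h c ∈ C) ∧
    ∀ c ∈ C, Δ k H c ∈ LinearMap.range (lTensor H C.subtype)

/-- An irreducible Yetter–Drinfeld submodule of `(H, ·ad, Δ)`. -/
def IsIrredYDSubmoduleOfH (C : Submodule k H) : Prop :=
  C ≠ ⊥ ∧ IsYDSubmoduleOfH C ∧
    ∀ C' ≤ C, IsYDSubmoduleOfH C' → C' = ⊥ ∨ C' = C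

/-- A linear equivalence intertwining two relative Hopf module structures. -/
def IsYDEquiv {V V' : Type*} [AddCommGroup V] [Module k V] [AddCommGroup V']
    [Module k V'] (aV : H ⊗[k] V →ₗ[k] V) (ρV : V →ₗ[k] H ⊗[k] V)
    (aV' : H ⊗[k] V' →ₗ[k] V') (ρV' : V' →ₗ[k] H ⊗[k] V')
    (e : V ≃ₗ[k] V') : Prop :=
  (e.toLinearMap ∘ₗ aV = aV' ∘ₗ lTensor H e.toLinearMap) ∧
    ρV' ∘ₗ e.toLinearMap = lTensor H e.toLinearMap ∘ₗ ρV

end More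

universe u_rep u_vec

/-- A bundled left `H`-module (over the base field `k`). -/
structure Rep (k : Type*) (H : Type*) [Field k] [Ring H] [HopfAlgebra k H] where
  carrier : Type u_rep
  [isAddCommGroup : AddCommGroup carrier]
  [isModuleBase : Module k carrier]
  [isModuleH : Module H carrier]
  [isTower : IsScalarTower k H carrier]

attribute [instance] Rep.isAddCommGroup Rep.isModuleBase Rep.isModuleH Rep.isTower

/-- A bundled `k`-vector space. -/
structure Vect (k : Type*) [Field k] where
  carrier : Type u_vec
  [isAddCommGroup : AddCommGroup carrier]
  [isModuleBase : Module k carrier]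

attribute [instance] Vect.isAddCommGroup Vect.isModuleBase


/-!
The inverse pair is read off from the regular module `H`: an `H`-linear map `f : W → W'` intertwines
`β` and `γ`, and `h ⊗ w`, `w ⊗ h` are the images of `h ⊗ 1`, `1 ⊗ h` under `a ↦ a • w`. So
`γ ∘ β = id` and `β ∘ γ = id` reduce to `h₍₃₎ ⊗ S⁻¹(h₍₂₎) h₍₁₎ = h ⊗ 1` and
`h₍₂₎ S⁻¹(h₍₁₎) ⊗ h₍₃₎ = 1 ⊗ h`, which hold by coassociativity because `S⁻¹` reverses the
antipode axioms. `β` is `H`-linear because `Δ` is multiplicative.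

For colinearity, `β` intertwines the two coactions as soon as the coaction `ρ` of `W` satisfies
`ρ(h w) = h₍₁₎ ·ad w₍₋₁₎ ⊗ h₍₂₎ w₍₀₎`; this is again coassociativity. For `ρ_R` the compatibility
comes from `Q = R₂₁ R` commuting with `Δ(H)`: writing `u = (S ⊗ id) Q`,
`u¹ ⊗ u² h = h₍₁₎ S(Q¹ h₍₂₎) ⊗ Q² h₍₃₎ = h₍₁₎ S(h₍₂₎ Q¹) ⊗ h₍₃₎ Q² = h₍₁₎ ·ad u¹ ⊗ h₍₂₎ u²`.
-/

section Development

variable {k H}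
variable {W W' : Type*} [AddCommGroup W] [Module k W] [Module H W] [IsScalarTower k H W]
  [AddCommGroup W'] [Module k W'] [Module H W'] [IsScalarTower k H W']

lemma antipode_algebraMap (c : k) : S k H (algebraMap k H c) = algebraMap k H c := by
  simp [Algebra.algebraMap_eq_smul_one]

lemma tensorComm_mul (x y : H ⊗[k] H) :
    TensorProduct.comm k H H (x * y) = TensorProduct.comm k H H x * TensorProduct.comm k H H y :=
  map_mul (Algebra.TensorProduct.comm k H H) x y

lemma adT_tmul (a x : H) :
    adT k H (a ⊗ₜ x) = mul' k H (TensorProduct.map (mulRight k x) (S k H) (Δ k H a)) := by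
  simp only [adT, coe_comp, Function.comp_apply, LinearEquiv.coe_coe, rTensor_tmul]
  induction Δ k H a using TensorProduct.induction_on with
  | zero => simp
  | tmul b c => simp [mul_assoc]
  | add y z hy hz => simp_all [add_tmul]

@[simp] lemma actT_tmul (h : H) (w : W) : actT (k := k) W (h ⊗ₜ w) = h • w := by
  simp [actT]

lemma actT_self_eq_mul' : actT (k := k) (H := H) H = mul' k H := by
  ext
  simp

lemma restrictScalars_toSpanSingleton_one :
    (toSpanSingleton H H (1 : H) : H →ₗ[k] H) = LinearMap.id := by
  ext
  simp

lemma tmul_eq_lTensor_toSpanSingleton (h : H) (w : W) :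
    h ⊗ₜ w = lTensor H (toSpanSingleton H W w : H →ₗ[k] W) (h ⊗ₜ (1 : H)) := by
  simp

lemma tmul_eq_rTensor_toSpanSingleton (w : W) (h : H) :
    w ⊗ₜ h = rTensor H (toSpanSingleton H W w : H →ₗ[k] W) ((1 : H) ⊗ₜ[k] h) := by
  simp

lemma betaMap_tmul (h : H) (w : W) :
    betaMap W (h ⊗ₜ w) = rTensor H (toSpanSingleton H W w : H →ₗ[k] W) (Δ k H h) := by
  simp only [betaMap, coe_comp, Function.comp_apply, rTensor_tmul, LinearEquiv.coe_coe]
  induction Δ k H h using TensorProduct.induction_on with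
  | zero => simp
  | tmul a b => simp
  | add x y hx hy => simp_all [add_tmul]

lemma gammaMap_tmul (S' : H →ₗ[k] H) (w : W) (h : H) :
    gammaMap W S' (w ⊗ₜ h) = TensorProduct.comm k W H
      (rTensor H ((toSpanSingleton H W w : H →ₗ[k] W) ∘ₗ S') (Δ k H h)) := by
  simp only [gammaMap, coe_comp, Function.comp_apply, lTensor_tmul, LinearEquiv.coe_coe]
  induction Δ k H h using TensorProduct.induction_on with
  | zero => simp
  | tmul a b => simp
  | add x y hx hy => simp_all [tmul_add]

lemma betaMap_comp_lTensor (f : W →ₗ[H] W') :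
    betaMap W' ∘ₗ lTensor H (f : W →ₗ[k] W') = rTensor H (f : W →ₗ[k] W') ∘ₗ betaMap W := by
  ext h w
  simp only [AlgebraTensorModule.curry_apply, curry_apply, coe_restrictScalars, coe_comp,
    Function.comp_apply, lTensor_tmul, betaMap_tmul, ← rTensor_comp_apply]
  congr 2
  ext
  simp

lemma gammaMap_comp_rTensor (S' : H →ₗ[k] H) (f : W →ₗ[H] W') :
    gammaMap W' S' ∘ₗ rTensor H (f : W →ₗ[k] W') =
      lTensor H (f : W →ₗ[k] W') ∘ₗ gammaMap W S' := by
  ext w h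
  simp only [AlgebraTensorModule.curry_apply, curry_apply, coe_restrictScalars, coe_comp,
    Function.comp_apply, rTensor_tmul, gammaMap_tmul]
  induction Δ k H h using TensorProduct.induction_on with
  | zero => simp
  | tmul a b => simp
  | add x y hx hy => simp_all

lemma diagAct_comp_lTensor_rTensor {M : Type*} [AddCommGroup M] [Module k M]
    (aM : H ⊗[k] M →ₗ[k] M) (f : W →ₗ[H] W') :
    diagAct (actT W') aM ∘ₗ lTensor H (rTensor M (f : W →ₗ[k] W')) =
      rTensor M (f : W →ₗ[k] W') ∘ₗ diagAct (actT W) aM := by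
  ext h w m
  simp only [AlgebraTensorModule.curry_apply, curry_apply, coe_restrictScalars, coe_comp,
    Function.comp_apply, lTensor_tmul, rTensor_tmul, diagAct, LinearEquiv.coe_coe]
  induction Δ k H h using TensorProduct.induction_on with
  | zero => simp
  | tmul a b => simp
  | add x y hx hy => simp_all [add_tmul]

lemma betaMap_self_tmul_one (h : H) : betaMap H (h ⊗ₜ (1 : H)) = Δ k H h := by
  rw [betaMap_tmul, restrictScalars_toSpanSingleton_one, rTensor_id_apply]

lemma diagAct_self (g : H) (x : H ⊗[k] H) :
    diagAct (actT (k := k) H) (actT H) (g ⊗ₜ x) = Δ k H g * x := by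
  simp only [diagAct, coe_comp, Function.comp_apply, LinearEquiv.coe_coe, rTensor_tmul]
  induction Δ k H g using TensorProduct.induction_on with
  | zero => simp
  | add y z hy hz => simp_all [add_tmul, add_mul]
  | tmul a b =>
    induction x using TensorProduct.induction_on with
    | zero => simp
    | tmul c d => simp
    | add y z hy hz => simp_all [tmul_add, mul_add]

section InverseAntipode

variable (S' : H →ₗ[k] H) (hS'l : ∀ x : H, S' (S k H x) = x) (hS'r : ∀ x : H, S k H (S' x) = x)
include hS'l hS'r

lemma mul_inv_antipode_rTensor_comm_comul :
    mul' k H ∘ₗ rTensor H S' ∘ₗ (TensorProduct.comm k H H).toLinearMap ∘ₗ Δ k H =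
      Algebra.linearMap k H ∘ₗ ε k H := by
  have hS : S k H ∘ₗ mul' k H ∘ₗ rTensor H S' ∘ₗ (TensorProduct.comm k H H).toLinearMap =
      mul' k H ∘ₗ rTensor H (S k H) := by
    ext a b
    simp [HopfAlgebra.antipode_mul_antidistrib, hS'r]
  ext h
  apply Function.LeftInverse.injective hS'l
  simpa [antipode_algebraMap] using congr($hS (Δ k H h))

lemma mul_inv_antipode_lTensor_comm_comul :
    mul' k H ∘ₗ lTensor H S' ∘ₗ (TensorProduct.comm k H H).toLinearMap ∘ₗ Δ k H =
      Algebra.linearMap k H ∘ₗ ε k H := by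
  have hS : S k H ∘ₗ mul' k H ∘ₗ lTensor H S' ∘ₗ (TensorProduct.comm k H H).toLinearMap =
      mul' k H ∘ₗ lTensor H (S k H) := by
    ext a b
    simp [HopfAlgebra.antipode_mul_antidistrib, hS'r]
  ext h
  apply Function.LeftInverse.injective hS'l
  simpa [antipode_algebraMap] using congr($hS (Δ k H h))

lemma gammaMap_self_comul (h : H) : gammaMap H S' (Δ k H h) = h ⊗ₜ 1 := by
  simp only [gammaMap, coe_comp, Function.comp_apply, LinearEquiv.coe_coe,
    Coalgebra.coassoc_symm_apply, ← rTensor_comp_apply, actT_self_eq_mul',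
    mul_inv_antipode_rTensor_comm_comul S' hS'l hS'r]
  simp [rTensor_comp_apply]

lemma betaMap_self_gammaMap_self_one_tmul (h : H) :
    betaMap H (gammaMap H S' (1 ⊗ₜ h)) = 1 ⊗ₜ h := by
  have hβ : ∀ x : H ⊗[k] H, betaMap H (TensorProduct.comm k H H (rTensor H S' x)) =
      rTensor H (mul' k H ∘ₗ lTensor H S' ∘ₗ (TensorProduct.comm k H H).toLinearMap)
        ((TensorProduct.assoc k H H H).symm (lTensor H (Δ k H) x)) := by
    intro x
    induction x using TensorProduct.induction_on with
    | zero => simp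
    | add x y hx hy => simp_all
    | tmul a b =>
      rw [rTensor_tmul, TensorProduct.comm_tmul, betaMap_tmul, lTensor_tmul]
      induction Δ k H b using TensorProduct.induction_on with
      | zero => simp
      | tmul c d => simp
      | add x y hx hy => simp_all [tmul_add]
  rw [gammaMap_tmul, restrictScalars_toSpanSingleton_one, id_comp, hβ,
    Coalgebra.coassoc_symm_apply, ← rTensor_comp_apply, comp_assoc, comp_assoc,
    mul_inv_antipode_lTensor_comm_comul S' hS'l hS'r]
  simp [rTensor_comp_apply]

lemma gammaMap_comp_betaMap : gammaMap W S' ∘ₗ betaMap W = LinearMap.id := by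
  ext h w
  simp only [AlgebraTensorModule.curry_apply, curry_apply, coe_restrictScalars, coe_comp,
    Function.comp_apply, id_coe, id_eq]
  rw [tmul_eq_lTensor_toSpanSingleton, ← comp_apply (betaMap W), betaMap_comp_lTensor,
    comp_apply, betaMap_self_tmul_one, ← comp_apply (gammaMap W S'), gammaMap_comp_rTensor,
    comp_apply, gammaMap_self_comul S' hS'l hS'r]

lemma betaMap_comp_gammaMap : betaMap W ∘ₗ gammaMap W S' = LinearMap.id := by
  ext w h
  simp only [AlgebraTensorModule.curry_apply, curry_apply, coe_restrictScalars, coe_comp,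
    Function.comp_apply, id_coe, id_eq]
  rw [tmul_eq_rTensor_toSpanSingleton, ← comp_apply (gammaMap W S'), gammaMap_comp_rTensor,
    comp_apply, ← comp_apply (betaMap W), betaMap_comp_lTensor, comp_apply,
    betaMap_self_gammaMap_self_one_tmul S' hS'l hS'r]

end InverseAntipode

lemma betaMap_comp_regAct :
    betaMap W ∘ₗ regAct W =
      diagAct (actT (k := k) (H := H) W) (actT H) ∘ₗ lTensor H (betaMap W) := by
  ext g h w
  simp only [AlgebraTensorModule.curry_apply, curry_apply, coe_restrictScalars, coe_comp,
    Function.comp_apply, lTensor_tmul, regAct, LinearEquiv.coe_coe,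
    TensorProduct.assoc_symm_tmul, rTensor_tmul, mul'_apply]
  rw [betaMap_tmul, betaMap_tmul, ← lTensor_tmul, ← comp_apply (diagAct _ _),
    diagAct_comp_lTensor_rTensor, comp_apply, diagAct_self, Bialgebra.comul_mul]

/-- `a ⊗ b ↦ (a ·ad y⁽¹⁾) ⊗ b • y⁽²⁾`. -/
def adjointSmul (y : H ⊗[k] W) : H ⊗[k] H →ₗ[k] H ⊗[k] W :=
  TensorProduct.map (adT k H) (actT W) ∘ₗ (tensorTensorTensorComm k H H H W).toLinearMap ∘ₗ
    (TensorProduct.mk k _ _).flip y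

lemma barCoact_betaMap_tmul {ρ : W →ₗ[k] H ⊗[k] W} (hρ : IsYDCompat (actT W) ρ) (h : H) (w : W) :
    barCoact ρ H (betaMap W (h ⊗ₜ w)) =
      TensorProduct.assoc k H W H
        (rTensor H (adjointSmul (ρ w)) (rTensor H (Δ k H) (Δ k H h))) := by
  have hρσ : ρ ∘ₗ (toSpanSingleton H W w : H →ₗ[k] W) = adjointSmul (ρ w) ∘ₗ Δ k H := by
    ext a
    simpa [adjointSmul] using congr($hρ (a ⊗ₜ w))
  rw [betaMap_tmul, barCoact, comp_apply, ← rTensor_comp_apply, ← rTensor_comp_apply, hρσ]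
  rfl

lemma lTensor_betaMap_inducedCoact_tmul (ρ : W →ₗ[k] H ⊗[k] W) (h : H) (w : W) :
    lTensor H (betaMap W) (inducedCoact ρ (h ⊗ₜ w)) =
      TensorProduct.assoc k H W H (rTensor H (adjointSmul (ρ w))
        ((TensorProduct.assoc k H H H).symm (lTensor H (Δ k H) (Δ k H h)))) := by
  simp only [inducedCoact, coe_comp, Function.comp_apply, LinearEquiv.coe_coe, map_tmul]
  generalize Δ k H h = x
  generalize ρ w = y
  induction x using TensorProduct.induction_on with
  | zero => simp
  | add x x' hx hx' => simp_all [add_tmul]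
  | tmul a b =>
    induction y using TensorProduct.induction_on with
    | zero => simp [adjointSmul]
    | add y y' hy hy' => simp_all [tmul_add, adjointSmul, comp_add, rTensor_add]
    | tmul p v =>
      simp only [tensorTensorTensorComm_tmul, rTensor_tmul, lTensor_tmul, betaMap_tmul]
      induction Δ k H b using TensorProduct.induction_on with
      | zero => simp
      | tmul c d => simp [adjointSmul]
      | add z z' hz hz' => simp_all [tmul_add]

lemma barCoact_comp_betaMap {ρ : W →ₗ[k] H ⊗[k] W} (hρ : IsYDCompat (actT W) ρ) :
    barCoact ρ H ∘ₗ betaMap W = lTensor H (betaMap W) ∘ₗ inducedCoact ρ := by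
  ext h w
  simp only [AlgebraTensorModule.curry_apply, curry_apply, coe_restrictScalars, coe_comp,
    Function.comp_apply]
  rw [barCoact_betaMap_tmul hρ, lTensor_betaMap_inducedCoact_tmul, Coalgebra.coassoc_symm_apply]

/-- `a ⊗ b ⊗ c ↦ a S(b) ⊗ c`. -/
def mulAntipodeLeft : H ⊗[k] (H ⊗[k] H) →ₗ[k] H ⊗[k] H :=
  rTensor H (mul' k H) ∘ₗ (TensorProduct.assoc k H H H).symm.toLinearMap ∘ₗ
    lTensor H (rTensor H (S k H))

lemma lTensor_mulRight_rTensor_antipode_eq (Q : H ⊗[k] H) (h : H) :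
    lTensor H (mulRight k h) (rTensor H (S k H) Q) =
      mulAntipodeLeft (lTensor H (mulLeft k Q ∘ₗ Δ k H) (Δ k H h)) := by
  induction Q using TensorProduct.induction_on with
  | zero => simp
  | add Q Q' hQ hQ' =>
    simp_all [show mulLeft k (Q + Q') = mulLeft k Q + mulLeft k Q' from
      ext fun _ => add_mul _ _ _, add_comp, lTensor_add]
  | tmul p q =>
    have hM : mulAntipodeLeft ∘ₗ lTensor H (mulLeft k (p ⊗ₜ q)) ∘ₗ
        (TensorProduct.assoc k H H H).toLinearMap =
        TensorProduct.map (mulRight k (S k H p) ∘ₗ mul' k H ∘ₗ lTensor H (S k H))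
          (mulLeft k q) := by
      ext a b c
      simp [mulAntipodeLeft, HopfAlgebra.antipode_mul_antidistrib, mul_assoc]
    rw [lTensor_comp_apply, ← Coalgebra.coassoc_apply]
    have := congr($hM (rTensor H (Δ k H) (Δ k H h)))
    simp only [coe_comp, Function.comp_apply, LinearEquiv.coe_coe] at this
    rw [this, map_rTensor, comp_assoc, comp_assoc, HopfAlgebra.mul_antipode_lTensor_comul,
      ← comp_assoc, ← map_rTensor, Coalgebra.rTensor_counit_comul]
    simp

lemma map_adT_mul'_rTensor_antipode_eq (Q : H ⊗[k] H) (h : H) :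
    TensorProduct.map (adT k H) (mul' k H)
        (tensorTensorTensorComm k H H H H (Δ k H h ⊗ₜ rTensor H (S k H) Q)) =
      mulAntipodeLeft (lTensor H (mulRight k Q ∘ₗ Δ k H) (Δ k H h)) := by
  induction Q using TensorProduct.induction_on with
  | zero => simp
  | add Q Q' hQ hQ' =>
    simp_all [show mulRight k (Q + Q') = mulRight k Q + mulRight k Q' from
      ext fun _ => mul_add _ _ _, add_comp, lTensor_add, tmul_add]
  | tmul p q =>
    have hM : mulAntipodeLeft ∘ₗ lTensor H (mulRight k (p ⊗ₜ q)) ∘ₗ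
        (TensorProduct.assoc k H H H).toLinearMap =
        TensorProduct.map (mul' k H ∘ₗ TensorProduct.map (mulRight k (S k H p)) (S k H))
          (mulRight k q) := by
      ext a b c
      simp [mulAntipodeLeft, HopfAlgebra.antipode_mul_antidistrib, mul_assoc]
    rw [lTensor_comp_apply, ← Coalgebra.coassoc_apply]
    have := congr($hM (rTensor H (Δ k H) (Δ k H h)))
    simp only [coe_comp, Function.comp_apply, LinearEquiv.coe_coe] at this
    rw [this, map_rTensor, rTensor_tmul]
    induction Δ k H h using TensorProduct.induction_on with
    | zero => simp
    | tmul a c => simp [adT_tmul]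
    | add y z hy hz => simp_all [add_tmul]

lemma lTensor_mulRight_rTensor_antipode_of_commute (Q : H ⊗[k] H)
    (hQ : ∀ h : H, Q * Δ k H h = Δ k H h * Q) (h : H) :
    lTensor H (mulRight k h) (rTensor H (S k H) Q) =
      TensorProduct.map (adT k H) (mul' k H)
        (tensorTensorTensorComm k H H H H (Δ k H h ⊗ₜ rTensor H (S k H) Q)) := by
  rw [lTensor_mulRight_rTensor_antipode_eq, map_adT_mul'_rTensor_antipode_eq]
  congr 3
  ext x
  exact hQ x

lemma tensorComm_mul_self_commute_comul
    (hR : ∀ h : H, R * Δ k H h = TensorProduct.comm k H H (Δ k H h) * R) (h : H) :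
    (TensorProduct.comm k H H R * R) * Δ k H h = Δ k H h * (TensorProduct.comm k H H R * R) := by
  calc (TensorProduct.comm k H H R * R) * Δ k H h
      = TensorProduct.comm k H H R * (TensorProduct.comm k H H (Δ k H h) * R) := by
        rw [mul_assoc, hR]
    _ = TensorProduct.comm k H H (R * Δ k H h) * R := by rw [tensorComm_mul, mul_assoc]
    _ = TensorProduct.comm k H H (TensorProduct.comm k H H (Δ k H h) * R) * R := by rw [hR]
    _ = Δ k H h * (TensorProduct.comm k H H R * R) := by
        rw [tensorComm_mul, TensorProduct.comm_comm, mul_assoc]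

lemma coactR_apply (w : W) :
    coactR R (actT W) w = lTensor H (toSpanSingleton H W w : H →ₗ[k] W) (uElt k H R) := by
  simp only [coactR, coe_comp, Function.comp_apply, LinearEquiv.coe_coe, TensorProduct.mk_apply]
  induction uElt k H R using TensorProduct.induction_on with
  | zero => simp
  | tmul a b => simp
  | add x y hx hy => simp_all [add_tmul]

lemma isYDCompat_coactR
    (hR : ∀ h : H, R * Δ k H h = TensorProduct.comm k H H (Δ k H h) * R) :
    IsYDCompat (actT W) (coactR R (actT W)) := by
  ext h w
  simp only [AlgebraTensorModule.curry_apply, curry_apply, coe_restrictScalars, coe_comp,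
    Function.comp_apply, LinearEquiv.coe_coe, map_tmul, actT_tmul, coactR_apply]
  have hσ : (toSpanSingleton H W (h • w) : H →ₗ[k] W) =
      (toSpanSingleton H W w : H →ₗ[k] W) ∘ₗ mulRight k h := by
    ext a
    simp [mul_smul]
  rw [hσ, lTensor_comp_apply, uElt,
    lTensor_mulRight_rTensor_antipode_of_commute _ (tensorComm_mul_self_commute_comul R hR)]
  generalize rTensor H (S k H) (TensorProduct.comm k H H R * R) = u
  induction u using TensorProduct.induction_on with
  | zero => simp
  | add x y hx hy => simp_all [tmul_add]
  | tmul p q =>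
    induction Δ k H h using TensorProduct.induction_on with
    | zero => simp
    | tmul a b => simp [mul_smul]
    | add x y hx hy => simp_all [add_tmul]

end Development

theorem betaMap_iso (R : H ⊗[k] H)
    (hR : IsQuasiTriangular k H R)
    (S' : H →ₗ[k] H) (hS'l : ∀ x : H, S' (S k H x) = x)
    (hS'r : ∀ x : H, S k H (S' x) = x)
    (W : Type*) [AddCommGroup W] [Module k W] [Module H W] [IsScalarTower k H W] :
    (gammaMap W S' ∘ₗ betaMap W = LinearMap.id) ∧
      (betaMap W ∘ₗ gammaMap W S' = LinearMap.id) ∧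
      (betaMap W ∘ₗ regAct W = diagAct (actT (k := k) (H := H) W) (actT (k := k) (H := H) H) ∘ₗ lTensor H (betaMap W)) ∧
      (barCoact (coactR R (actT W)) H ∘ₗ betaMap W =
        lTensor H (betaMap W) ∘ₗ inducedCoact (coactR R (actT W))) :=
  ⟨gammaMap_comp_betaMap S' hS'l hS'r, betaMap_comp_gammaMap S' hS'l hS'r, betaMap_comp_regAct,
    barCoact_comp_betaMap (isYDCompat_coactR R hR.comul_compat)⟩

end Paper
end
end

section
/- Let (H,R) be a factorizable finite-dimensional quasi-triangular Hopf algebra over an algebraically closed field k, and let W be a simple left H-module. Then W, regarded as a left H_R-comodule via ρ_R(w) = S(R_2^2 R_1^1) ⊗ R_2^1 R_1^2 w, is a simple left H_R-comodule, and End^{H_R}(W) ≅ k. -/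
open TensorProduct LinearMap

noncomputable section
namespace Paper

variable (k : Type*) [Field k] (H : Type*) [Ring H] [HopfAlgebra k H]

variable (R : H ⊗[k] H)

universe u_rep u_vec

/-! The pairing of the coaction with `p ∈ H*` is `(p ⊗ id) ρ_R(w) = θ(p) · w`, where
`θ(p) = ⟨p, S(R₂² R₁¹)⟩ R₂¹ R₁²`. From the axioms of `R` one gets `(S ⊗ id) R = R⁻¹` and
`(S ⊗ S) R = R`, so `θ(p)` is the factorization map applied to `p ∘ S` and the image of the
factorization map lies in the image of `S`. Factorizability therefore makes `S`, and then `θ`,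
surjective: every `h ∈ H` acts on `W` through the coaction. Hence subcomodules of `W` are
`H`-submodules and comodule endomorphisms are `H`-linear, and the theorem follows from the
simplicity of `W` and Schur's lemma over the algebraically closed field `k`. -/

open Coalgebra

variable {k H}

section Slice

variable {A M N : Type*} [AddCommMonoid A] [Module k A] [AddCommMonoid M] [Module k M]
  [AddCommMonoid N] [Module k N]

def slice (p : Module.Dual k A) : A ⊗[k] M →ₗ[k] M :=
  (TensorProduct.lid k M).toLinearMap ∘ₗ rTensor M p

@[simp]
theorem slice_tmul (p : Module.Dual k A) (a : A) (m : M) : slice p (a ⊗ₜ m) = p a • m := rfl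

theorem slice_rTensor {B : Type*} [AddCommMonoid B] [Module k B] (p : Module.Dual k A)
    (f : B →ₗ[k] A) (t : B ⊗[k] M) : slice p (rTensor M f t) = slice (p ∘ₗ f) t := by
  induction t using TensorProduct.induction_on with
  | zero => simp
  | add x y hx hy => simp only [map_add, hx, hy]
  | tmul b m => simp

theorem slice_lTensor (p : Module.Dual k A) (f : M →ₗ[k] N) (t : A ⊗[k] M) :
    slice p (lTensor A f t) = f (slice p t) := by
  induction t using TensorProduct.induction_on with
  | zero => simp
  | add x y hx hy => simp only [map_add, hx, hy]
  | tmul b m => simp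

theorem slice_assoc_tmul (p : Module.Dual k A) (t : A ⊗[k] M) (n : N) :
    slice p (TensorProduct.assoc k A M N (t ⊗ₜ n)) = slice p t ⊗ₜ n := by
  induction t using TensorProduct.induction_on with
  | zero => simp
  | add x y hx hy => simp only [TensorProduct.add_tmul, map_add, hx, hy]
  | tmul a m => simp [TensorProduct.smul_tmul']

theorem slice_mem_of_mem_range_lTensor {U : Submodule k M} {t : A ⊗[k] M}
    (ht : t ∈ range (lTensor A U.subtype)) (p : Module.Dual k A) : slice p t ∈ U := by
  obtain ⟨t, rfl⟩ := ht
  rw [slice_lTensor]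
  exact (slice p t).2

end Slice

section QuasiTriangular

variable {R : H ⊗[k] H}

theorem map_antipode_antipode_mul (P Q : H ⊗[k] H) :
    TensorProduct.map (S k H) (S k H) (P * Q) =
      TensorProduct.map (S k H) (S k H) Q * TensorProduct.map (S k H) (S k H) P := by
  induction P using TensorProduct.induction_on with
  | zero => simp
  | add P₁ P₂ h₁ h₂ => simp only [map_add, add_mul, mul_add, h₁, h₂]
  | tmul a b =>
    induction Q using TensorProduct.induction_on with
    | zero => simp
    | add Q₁ Q₂ h₁ h₂ => simp only [map_add, add_mul, mul_add, h₁, h₂]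
    | tmul c d => simp [Algebra.TensorProduct.tmul_mul_tmul, HopfAlgebra.antipode_mul_antidistrib]

theorem vElt_eq : vElt k H R = TensorProduct.comm k H H R * R := by
  change Algebra.TensorProduct.comm k H H (R * Algebra.TensorProduct.comm k H H R) = _
  rw [map_mul]
  exact congrArg₂ (· * ·) rfl (TensorProduct.comm_comm k H H R)

theorem uElt_eq : uElt k H R = rTensor H (S k H) (vElt k H R) := by
  rw [uElt, vElt_eq]

namespace IsQuasiTriangular

theorem rTensor_counit (hR : IsQuasiTriangular k H R) :
    rTensor H (Algebra.linearMap k H ∘ₗ ε k H) R = 1 := by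
  let φ : H ⊗[k] (H ⊗[k] H) →ₐ[k] H ⊗[k] H :=
    (Algebra.TensorProduct.lid k _).toAlgHom.comp
      (Algebra.TensorProduct.map (Bialgebra.counitAlgHom k H) (AlgHom.id k _))
  have h_comul (z : H ⊗[k] H) : φ (TensorProduct.assoc k H H H (rTensor H (Δ k H) z)) = z := by
    induction z using TensorProduct.induction_on with
    | zero => simp
    | add x y hx hy => simp only [map_add, hx, hy]
    | tmul a b =>
      conv_rhs => rw [← sum_counit_smul (ℛ k a)]
      simp [φ, ← (ℛ k a).eq, TensorProduct.sum_tmul, TensorProduct.smul_tmul']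
  have h13 (z : H ⊗[k] H) : φ (r13 k H z) = rTensor H (Algebra.linearMap k H ∘ₗ ε k H) z := by
    unfold r13
    induction z using TensorProduct.induction_on with
    | zero => simp
    | add x y hx hy => simp only [map_add, hx, hy]
    | tmul a b => simp [φ, TensorProduct.smul_tmul', Algebra.algebraMap_eq_smul_one]
  have h23 (z : H ⊗[k] H) : φ (r23 k H z) = z := by
    simp [φ, r23]
  have h := congrArg φ hR.comul_rTensor
  rw [map_mul, h_comul, h13, h23] at h
  exact hR.isUnit.mul_right_cancel (by rw [one_mul, ← h])

theorem lTensor_counit (hR : IsQuasiTriangular k H R) :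
    lTensor H (Algebra.linearMap k H ∘ₗ ε k H) R = 1 := by
  let φ : H ⊗[k] (H ⊗[k] H) →ₐ[k] H ⊗[k] H :=
    Algebra.TensorProduct.map (AlgHom.id k H)
      ((Algebra.TensorProduct.rid k k H).toAlgHom.comp
        (Algebra.TensorProduct.map (AlgHom.id k H) (Bialgebra.counitAlgHom k H)))
  have h_comul (z : H ⊗[k] H) : φ (lTensor H (Δ k H) z) = z := by
    induction z using TensorProduct.induction_on with
    | zero => simp
    | add x y hx hy => simp only [map_add, hx, hy]
    | tmul a b =>
      have hb := congr(TensorProduct.rid k H $(sum_tmul_counit_eq (ℛ k b)))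
      simp only [map_sum, TensorProduct.rid_tmul, one_smul] at hb
      conv_rhs => rw [← hb]
      simp [φ, ← (ℛ k b).eq, TensorProduct.tmul_sum]
  have h13 (z : H ⊗[k] H) : φ (r13 k H z) = lTensor H (Algebra.linearMap k H ∘ₗ ε k H) z := by
    unfold r13
    induction z using TensorProduct.induction_on with
    | zero => simp
    | add x y hx hy => simp only [map_add, hx, hy]
    | tmul a b => simp [φ, Algebra.algebraMap_eq_smul_one]
  have h12 (z : H ⊗[k] H) : φ (r12 k H z) = z := by
    unfold r12
    induction z using TensorProduct.induction_on with
    | zero => simp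
    | add x y hx hy => simp only [map_add, hx, hy]
    | tmul a b => simp [φ]
  have h := congrArg φ hR.comul_lTensor
  rw [map_mul, h_comul, h13, h12] at h
  exact hR.isUnit.mul_right_cancel (by rw [one_mul, ← h])

theorem rTensor_antipode_mul_self (hR : IsQuasiTriangular k H R) :
    rTensor H (S k H) R * R = 1 := by
  let ψ : H ⊗[k] (H ⊗[k] H) →ₗ[k] H ⊗[k] H :=
    rTensor H (mul' k H ∘ₗ rTensor H (S k H)) ∘ₗ (TensorProduct.assoc k H H H).symm.toLinearMap
  have h_comul (z : H ⊗[k] H) :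
      ψ (TensorProduct.assoc k H H H (rTensor H (Δ k H) z)) =
        rTensor H (Algebra.linearMap k H ∘ₗ ε k H) z := by
    induction z using TensorProduct.induction_on with
    | zero => simp
    | add x y hx hy => simp only [map_add, hx, hy]
    | tmul a b => simp [ψ]
  have h_mul (P Q : H ⊗[k] H) : ψ (r13 k H P * r23 k H Q) = rTensor H (S k H) P * Q := by
    unfold r13 r23
    induction P using TensorProduct.induction_on with
    | zero => simp
    | add P₁ P₂ h₁ h₂ => simp only [map_add, add_mul, h₁, h₂]
    | tmul a b =>
      induction Q using TensorProduct.induction_on with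
      | zero => simp
      | add Q₁ Q₂ h₁ h₂ => simp only [map_add, mul_add, h₁, h₂]
      | tmul c d => simp [ψ, Algebra.TensorProduct.tmul_mul_tmul]
  have h := congrArg ψ hR.comul_rTensor
  rwa [h_comul, h_mul, hR.rTensor_counit, eq_comm] at h

theorem mul_rTensor_antipode_self (hR : IsQuasiTriangular k H R) :
    R * rTensor H (S k H) R = 1 :=
  hR.isUnit.mul_right_cancel <| by rw [mul_assoc, hR.rTensor_antipode_mul_self, mul_one, one_mul]

theorem lTensor_comul_rTensor_antipode (hR : IsQuasiTriangular k H R) :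
    lTensor H (Δ k H) (rTensor H (S k H) R) =
      r12 k H (rTensor H (S k H) R) * r13 k H (rTensor H (S k H) R) := by
  let L : H ⊗[k] H →ₐ[k] H ⊗[k] (H ⊗[k] H) :=
    Algebra.TensorProduct.map (AlgHom.id k H) (Bialgebra.comulAlgHom k H)
  have hL (z : H ⊗[k] H) : L z = lTensor H (Δ k H) z := by
    induction z using TensorProduct.induction_on with
    | zero => simp
    | add x y hx hy => simp only [map_add, hx, hy]
    | tmul a b => simp [L]
  -- both sides are inverses of `(id ⊗ Δ) R = R₁₃ R₁₂`
  refine left_inv_eq_right_inv (a := r13 k H R * r12 k H R) ?_ ?_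
  · rw [← hR.comul_lTensor, ← hL, ← hL, ← map_mul, hR.rTensor_antipode_mul_self, map_one]
  · have r12_mul (z z' : H ⊗[k] H) : r12 k H z * r12 k H z' = r12 k H (z * z') :=
      (map_mul _ z z').symm
    have r13_mul (z z' : H ⊗[k] H) : r13 k H z * r13 k H z' = r13 k H (z * z') :=
      (map_mul _ z z').symm
    rw [mul_assoc, ← mul_assoc (r12 k H R), r12_mul, hR.mul_rTensor_antipode_self,
      show r12 k H 1 = 1 from map_one _, one_mul, r13_mul, hR.mul_rTensor_antipode_self]
    exact map_one _

theorem map_antipode_antipode (hR : IsQuasiTriangular k H R) :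
    TensorProduct.map (S k H) (S k H) R = R := by
  set X := rTensor H (S k H) R with hX
  let ψ : H ⊗[k] (H ⊗[k] H) →ₗ[k] H ⊗[k] H := lTensor H (mul' k H ∘ₗ lTensor H (S k H))
  have h_comul (z : H ⊗[k] H) :
      ψ (lTensor H (Δ k H) z) = lTensor H (Algebra.linearMap k H ∘ₗ ε k H) z := by
    induction z using TensorProduct.induction_on with
    | zero => simp
    | add x y hx hy => simp only [map_add, hx, hy]
    | tmul a b => simp [ψ]
  have h_mul (P Q : H ⊗[k] H) : ψ (r12 k H P * r13 k H Q) = P * lTensor H (S k H) Q := by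
    unfold r12 r13
    induction P using TensorProduct.induction_on with
    | zero => simp
    | add P₁ P₂ h₁ h₂ => simp only [map_add, add_mul, h₁, h₂]
    | tmul a b =>
      induction Q using TensorProduct.induction_on with
      | zero => simp
      | add Q₁ Q₂ h₁ h₂ => simp only [map_add, mul_add, h₁, h₂]
      | tmul c d => simp [ψ, Algebra.TensorProduct.tmul_mul_tmul]
  have h_counit : lTensor H (Algebra.linearMap k H ∘ₗ ε k H) X = 1 := by
    rw [hX, ← LinearMap.comp_apply, LinearMap.lTensor_comp_rTensor,
      ← LinearMap.rTensor_comp_lTensor, LinearMap.comp_apply, hR.lTensor_counit]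
    simp [Algebra.TensorProduct.one_def]
  -- `ψ` turns `(id ⊗ Δ) X = X₁₂ X₁₃` into `1 = X (S ⊗ S) R`, and `X = R⁻¹`
  have h := congrArg ψ hR.lTensor_comul_rTensor_antipode
  rw [h_comul, h_mul, h_counit] at h
  calc TensorProduct.map (S k H) (S k H) R = (R * X) * lTensor H (S k H) X := by
        rw [hR.mul_rTensor_antipode_self, one_mul, hX, ← LinearMap.comp_apply,
          LinearMap.lTensor_comp_rTensor]
    _ = R := by rw [mul_assoc, ← h, mul_one]

theorem vElt_eq_map_antipode (hR : IsQuasiTriangular k H R) :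
    vElt k H R = TensorProduct.map (S k H) (S k H) (R * TensorProduct.comm k H H R) := by
  rw [vElt_eq, map_antipode_antipode_mul, TensorProduct.map_comm, hR.map_antipode_antipode]

theorem factMap_mem_range_antipode (hR : IsQuasiTriangular k H R)
    (p : Module.Dual k H) : factMap k H R p ∈ Set.range (S k H) := by
  refine ⟨slice (p ∘ₗ S k H) (R * TensorProduct.comm k H H R), ?_⟩
  calc S k H (slice (p ∘ₗ S k H) (R * TensorProduct.comm k H H R))
      = slice p (rTensor H (S k H) (lTensor H (S k H) (R * TensorProduct.comm k H H R))) := by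
        rw [slice_rTensor, slice_lTensor]
    _ = factMap k H R p := by
        rw [← LinearMap.comp_apply (rTensor H (S k H)), LinearMap.rTensor_comp_lTensor,
          ← hR.vElt_eq_map_antipode]
        rfl

end IsQuasiTriangular

theorem IsFactorizable.antipode_bijective [FiniteDimensional k H] (hR : IsQuasiTriangular k H R)
    (hfact : IsFactorizable k H R) : Function.Bijective (S k H) := by
  have hsurj : Function.Surjective (S k H) := fun h => by
    obtain ⟨p, rfl⟩ := hfact.2 h
    exact hR.factMap_mem_range_antipode p
  exact ⟨LinearMap.injective_iff_surjective.mpr hsurj, hsurj⟩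

theorem IsFactorizable.exists_slice_uElt_eq [FiniteDimensional k H]
    (hR : IsQuasiTriangular k H R) (hfact : IsFactorizable k H R) (h : H) :
    ∃ p : Module.Dual k H, slice p (uElt k H R) = h := by
  let e := LinearEquiv.ofBijective (S k H) (hfact.antipode_bijective hR)
  obtain ⟨q, hq⟩ := hfact.2 h
  refine ⟨q ∘ₗ e.symm.toLinearMap, ?_⟩
  rw [uElt_eq, slice_rTensor, ← hq, show (q ∘ₗ e.symm.toLinearMap) ∘ₗ S k H = q from LinearMap.ext fun x => by simp [e]]
  rfl

end QuasiTriangular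

section SimpleModule

variable {A M : Type*} [Ring A] [Algebra k A] [AddCommGroup M] [Module k M] [Module A M]
  [IsScalarTower k A M] [IsSimpleModule A M]

theorem eq_bot_or_eq_top_of_smul_mem (U : Submodule k M) (hU : ∀ a : A, ∀ m ∈ U, a • m ∈ U) :
    U = ⊥ ∨ U = ⊤ := by
  let U' : Submodule A M := { U with smul_mem' := fun a m hm => hU a m hm }
  have hU' : U = U'.restrictScalars k := rfl
  rcases eq_bot_or_eq_top U' with h | h <;> simp [hU', h]

theorem exists_eq_smul_id_of_isAlgClosed [IsAlgClosed k] [FiniteDimensional k M]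
    (f : M →ₗ[A] M) : ∃ c : k, f.restrictScalars k = c • LinearMap.id := by
  have := IsSimpleModule.nontrivial A M
  obtain ⟨c, hc⟩ := Module.End.exists_eigenvalue (f.restrictScalars k)
  obtain ⟨v, hv⟩ := hc.exists_hasEigenvector
  refine ⟨c, LinearMap.ext fun m => ?_⟩
  -- Schur: `f - c` is an `A`-endomorphism of a simple module with a nonzero kernel
  have hzero : f - c • LinearMap.id = 0 := by
    refine (LinearMap.bijective_or_eq_zero _).resolve_left fun hbij => hv.2 (hbij.1 ?_)
    simpa [sub_eq_zero] using hv.apply_eq_smul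
  simpa [sub_eq_zero] using LinearMap.congr_fun hzero m

end SimpleModule

section Coaction

variable {M : Type*} [AddCommGroup M] [Module k M] [Module H M]

def ActsBySlices (ρ : M →ₗ[k] H ⊗[k] M) : Prop :=
  ∀ h : H, ∃ p : Module.Dual k H, ∀ m : M, slice p (ρ m) = h • m

theorem ActsBySlices.smul_mem {ρ : M →ₗ[k] H ⊗[k] M} (hρ : ActsBySlices ρ)
    {U : Submodule k M} (hU : IsSubcomodule ρ U) (h : H) {m : M} (hm : m ∈ U) : h • m ∈ U := by
  obtain ⟨p, hp⟩ := hρ h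
  rw [← hp]
  exact slice_mem_of_mem_range_lTensor (hU m hm) p

theorem ActsBySlices.map_smul {ρ : M →ₗ[k] H ⊗[k] M} (hρ : ActsBySlices ρ)
    {α : Module.End k M} (hα : lTensor H α ∘ₗ ρ = ρ ∘ₗ α) (h : H) (m : M) :
    α (h • m) = h • α m := by
  obtain ⟨p, hp⟩ := hρ h
  rw [← hp, ← hp, ← slice_lTensor, ← LinearMap.comp_apply (lTensor H α), hα,
    LinearMap.comp_apply]

variable [IsScalarTower k H M] {R : H ⊗[k] H}

theorem slice_coactR (p : Module.Dual k H) (m : M) :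
    slice p (coactR R (actT M) m) = slice p (uElt k H R) • m := by
  simp only [coactR, LinearMap.comp_apply, LinearEquiv.coe_coe, TensorProduct.mk_apply,
    slice_lTensor, slice_assoc_tmul]
  simp [actT]

theorem IsFactorizable.actsBySlices_coactR [FiniteDimensional k H]
    (hR : IsQuasiTriangular k H R) (hfact : IsFactorizable k H R) :
    ActsBySlices (coactR R (actT M)) := fun h => by
  obtain ⟨p, hp⟩ := hfact.exists_slice_uElt_eq hR h
  exact ⟨p, fun m => by rw [slice_coactR, hp]⟩

end Coaction

/-- Let `(H,R)` be a factorizable finite-dimensional quasi-triangular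
Hopf algebra over an algebraically closed field `k`, and `W` a simple left `H`-module.
Then `W`, with its canonical `H_R`-comodule structure, is a simple left `H_R`-comodule,
and `End^{H_R}(W) ≅ k`. -/
theorem simple_comodule_of_simple_module [IsAlgClosed k] [FiniteDimensional k H]
    (R : H ⊗[k] H) (hR : IsQuasiTriangular k H R) (hfact : IsFactorizable k H R)
    (W : Type*) [AddCommGroup W] [Module k W] [Module H W] [IsScalarTower k H W]
    [Module.Finite k W] (hW : IsSimpleModule H W) :
    IsSimpleComodule (coactR R (actT W)) ∧
      ∀ α : Module.End k W,
        lTensor H α ∘ₗ coactR R (actT W) = coactR R (actT W) ∘ₗ α →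
        ∃ c : k, α = c • LinearMap.id := by
  have hρ : ActsBySlices (coactR R (actT W)) := hfact.actsBySlices_coactR hR
  have := IsSimpleModule.nontrivial H W
  refine ⟨⟨bot_ne_top, fun U hU => ?_⟩, fun α hα => ?_⟩
  · exact eq_bot_or_eq_top_of_smul_mem (A := H) U fun h _ hm => hρ.smul_mem hU h hm
  · let αH : W →ₗ[H] W := { α with map_smul' := hρ.map_smul hα }
    exact exists_eq_smul_id_of_isAlgClosed αH

end Paper
end
end
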